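/- Let A ∈ Mat₃(C) with A^Σ invertible, let D be an invertible diagonal matrix, and let μ ∈ C be nonzero. Then M₂(A·D) = D⁻²·M₂(A), M₂(D·A) = det(D)⁻¹·M₂(A)·D, and M₂(μ·A) = μ⁻²·M₂(A). -/

import Mathlib

open Matrix

/-- `A^Σ`, with entries `(A^Σ)_{ij} = ∏_{k≠i} A_{kj}`. -/
def sigmaMat {C : Type*} [CommRing C] (A : Matrix (Fin 3) (Fin 3) C) :
    Matrix (Fin 3) (Fin 3) C :=
  Matrix.of fun i j => A (i + 1) j * A (i + 2) j

/-!
`Σ` is quadratic and acts column by column. Scaling the columns of `A` by `d` therefore scales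
the columns of `A^Σ` by `d²`, i.e. `(A D)^Σ = A^Σ D²`; scaling row `k` of `A` by `d k` multiplies
row `i` of `A^Σ` by `∏_{k ≠ i} d k`, i.e. `(D A)^Σ = adj(D) A^Σ` with `adj(D)⁻¹ = det(D)⁻¹ D`;
and `(μ A)^Σ = μ² A^Σ`. Inverting these identities gives the three formulas.
-/

theorem Fin.prod_univ_erase_three {M : Type*} [CommMonoid M] (f : Fin 3 → M) (i : Fin 3) :
    ∏ j ∈ Finset.univ.erase i, f j = f (i + 1) * f (i + 2) := by
  have hpair : Finset.univ.erase i = {i + 1, i + 2} := by fin_cases i <;> decide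
  rw [hpair, Finset.prod_pair (by fin_cases i <;> decide)]

namespace Matrix

variable {C : Type*} [CommRing C]

theorem adjugate_diagonal_fin_three (d : Fin 3 → C) :
    adjugate (diagonal d) = diagonal fun i => d (i + 1) * d (i + 2) := by
  simp only [adjugate_diagonal, Fin.prod_univ_erase_three]

theorem sigmaMat_mul_diagonal (A : Matrix (Fin 3) (Fin 3) C) (d : Fin 3 → C) :
    sigmaMat (A * diagonal d) = sigmaMat A * diagonal d ^ 2 := by
  ext i j
  simp only [sigmaMat, diagonal_pow, mul_diagonal, of_apply, Pi.pow_apply]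
  ring

theorem sigmaMat_diagonal_mul (d : Fin 3 → C) (A : Matrix (Fin 3) (Fin 3) C) :
    sigmaMat (diagonal d * A) = adjugate (diagonal d) * sigmaMat A := by
  ext i j
  simp only [sigmaMat, adjugate_diagonal_fin_three, diagonal_mul, of_apply]
  ring

theorem sigmaMat_smul (μ : C) (A : Matrix (Fin 3) (Fin 3) C) :
    sigmaMat (μ • A) = μ ^ 2 • sigmaMat A := by
  ext i j
  simp only [sigmaMat, Matrix.smul_apply, of_apply, smul_eq_mul]
  ring

theorem inv_smul_of_field {K n : Type*} [Field K] [Fintype n] [DecidableEq n] (k : K)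
    (A : Matrix n n K) : (k • A)⁻¹ = k⁻¹ • A⁻¹ := by
  rcases eq_or_ne k 0 with rfl | hk
  · simp
  by_cases hA : IsUnit A.det
  · exact inv_smul' A (Units.mk0 k hk) hA
  · have hkA : ¬IsUnit (k • A).det := by
      simpa [det_smul, isUnit_iff_ne_zero, hk] using hA
    rw [nonsing_inv_apply_not_isUnit _ hA, nonsing_inv_apply_not_isUnit _ hkA, smul_zero]

end Matrix

theorem stmt_16_general (C : Type*) [Field C] (A : Matrix (Fin 3) (Fin 3) C)
    (d : Fin 3 → C) (hd : ∀ i, d i ≠ 0) (μ : C) :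
    (sigmaMat (A * Matrix.diagonal d))⁻¹ = ((Matrix.diagonal d)⁻¹) ^ 2 * (sigmaMat A)⁻¹ ∧
      (sigmaMat (Matrix.diagonal d * A))⁻¹ =
        (Matrix.diagonal d).det⁻¹ • ((sigmaMat A)⁻¹ * Matrix.diagonal d) ∧
      (sigmaMat (μ • A))⁻¹ = μ⁻¹ ^ 2 • (sigmaMat A)⁻¹ := by
  have hD : IsUnit (diagonal d).det := by
    rw [det_diagonal, isUnit_iff_ne_zero]
    exact Finset.prod_ne_zero_iff.mpr fun i _ => hd i
  refine ⟨?_, ?_, ?_⟩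
  · rw [sigmaMat_mul_diagonal, Matrix.mul_inv_rev, inv_pow']
  · rw [sigmaMat_diagonal_mul, Matrix.mul_inv_rev, inv_adjugate _ hD, mul_smul_comm,
      Units.smul_def, Units.val_inv_eq_inv_val, IsUnit.unit_spec]
  · rw [sigmaMat_smul, inv_smul_of_field, inv_pow]

/-- Let `A ∈ Mat₃(C)` with `A^Σ` invertible, let `D` be an invertible
diagonal matrix, and let `μ ∈ C` be nonzero. Then (with `M₂(X) := (X^Σ)⁻¹`)
`M₂(A·D) = D⁻²·M₂(A)`, `M₂(D·A) = det(D)⁻¹·M₂(A)·D`, and `M₂(μ·A) = μ⁻²·M₂(A)`. -/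
theorem stmt_16 (C : Type*) [Field C] (A : Matrix (Fin 3) (Fin 3) C)
    (hs : IsUnit (sigmaMat A).det)
    (d : Fin 3 → C) (hd : ∀ i, d i ≠ 0) (μ : C) (hμ : μ ≠ 0) :
    (sigmaMat (A * Matrix.diagonal d))⁻¹ = ((Matrix.diagonal d)⁻¹) ^ 2 * (sigmaMat A)⁻¹ ∧
      (sigmaMat (Matrix.diagonal d * A))⁻¹ =
        (Matrix.diagonal d).det⁻¹ • ((sigmaMat A)⁻¹ * Matrix.diagonal d) ∧
      (sigmaMat (μ • A))⁻¹ = μ⁻¹ ^ 2 • (sigmaMat A)⁻¹ :=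
  stmt_16_general C A d hd μ
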